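/- arXiv:math/0209105 — 8 statements merged into one kernel-verified Lean document; each statement's English description precedes it below -/
import Mathlib

section
/- For any complex number b that is not the inverse of a nonzero integer, the product e_i ∘ e_j = (i/(1 + b·j))·e_{i+j} on E = ⊕_{i∈ℤ} ℂe_i satisfies the pre-Lie identity. -/
/-- The bilinear product on `E = ⊕_{i∈ℤ} ℂ e_i` determined on basis elements by
`e_i ∘ e_j = c i j • e_{i+j}`. -/
noncomputable def gradedProd (c : ℤ → ℤ → ℂ) (x y : ℤ →₀ ℂ) : ℤ →₀ ℂ :=
  x.sum fun i xi => y.sum fun j yj => Finsupp.single (i + j) (xi * yj * c i j)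

/-!
Both sides of the pre-Lie identity are additive in each of `x`, `y`, `z`, so it suffices to
check it on basis vectors `e_i, e_j, e_k`. There it becomes the identity
`i/(1+bj) · (i+j)/(1+bk) - j/(1+bk) · i/(1+b(j+k))` symmetric in `j, k`,
which holds in the field of rational functions once the denominators `1 + b m` are nonzero.
-/

/-- The pre-Lie identity for `gradedProd c` on basis vectors. -/
def IsPreLieStructureConstants (c : ℤ → ℤ → ℂ) : Prop :=
  ∀ i j k, c i j * c (i + j) k - c j k * c i (j + k) = c i k * c (i + k) j - c k j * c i (k + j)

namespace gradedProd

variable (c : ℤ → ℤ → ℂ)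

@[simp]
lemma zero_left (y : ℤ →₀ ℂ) : gradedProd c 0 y = 0 := by
  simp [gradedProd]

@[simp]
lemma zero_right (x : ℤ →₀ ℂ) : gradedProd c x 0 = 0 := by
  simp [gradedProd]

lemma add_left (x x' y : ℤ →₀ ℂ) :
    gradedProd c (x + x') y = gradedProd c x y + gradedProd c x' y := by
  unfold gradedProd
  rw [Finsupp.sum_add_index' (by simp)]
  intro i a a'
  rw [← Finsupp.sum_add]
  simp only [add_mul, Finsupp.single_add]

lemma add_right (x y y' : ℤ →₀ ℂ) :
    gradedProd c x (y + y') = gradedProd c x y + gradedProd c x y' := by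
  unfold gradedProd
  rw [← Finsupp.sum_add]
  congr 1
  ext i a
  rw [Finsupp.sum_add_index' (by simp)]
  intro j d d'
  rw [mul_add, add_mul, Finsupp.single_add]

lemma single_single (i j : ℤ) (a d : ℂ) :
    gradedProd c (Finsupp.single i a) (Finsupp.single j d)
      = Finsupp.single (i + j) (a * d * c i j) := by
  simp [gradedProd]

noncomputable def assoc (x y z : ℤ →₀ ℂ) : ℤ →₀ ℂ :=
  gradedProd c (gradedProd c x y) z - gradedProd c x (gradedProd c y z)

@[simp]
lemma assoc_zero_left (y z : ℤ →₀ ℂ) : assoc c 0 y z = 0 := by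
  simp [assoc]

@[simp]
lemma assoc_zero_middle (x z : ℤ →₀ ℂ) : assoc c x 0 z = 0 := by
  simp [assoc]

@[simp]
lemma assoc_zero_right (x y : ℤ →₀ ℂ) : assoc c x y 0 = 0 := by
  simp [assoc]

lemma assoc_add_left (x x' y z : ℤ →₀ ℂ) :
    assoc c (x + x') y z = assoc c x y z + assoc c x' y z := by
  simp only [assoc, add_left]
  abel

lemma assoc_add_middle (x y y' z : ℤ →₀ ℂ) :
    assoc c x (y + y') z = assoc c x y z + assoc c x y' z := by
  simp only [assoc, add_left, add_right]
  abel

lemma assoc_add_right (x y z z' : ℤ →₀ ℂ) :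
    assoc c x y (z + z') = assoc c x y z + assoc c x y z' := by
  simp only [assoc, add_right]
  abel

lemma assoc_single (i j k : ℤ) (a d e : ℂ) :
    assoc c (Finsupp.single i a) (Finsupp.single j d) (Finsupp.single k e)
      = Finsupp.single (i + j + k)
          (a * d * e * (c i j * c (i + j) k - c j k * c i (j + k))) := by
  simp only [assoc, single_single, ← add_assoc, ← Finsupp.single_sub]
  congr 1
  ring

theorem assoc_comm_of_isPreLieStructureConstants (hc : IsPreLieStructureConstants c)
    (x y z : ℤ →₀ ℂ) : assoc c x y z = assoc c x z y := by
  induction x using Finsupp.induction_linear with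
  | zero => simp
  | add x x' hx hx' => rw [assoc_add_left, assoc_add_left, hx, hx']
  | single i a =>
  induction y using Finsupp.induction_linear with
  | zero => simp
  | add y y' hy hy' => rw [assoc_add_middle, assoc_add_right, hy, hy']
  | single j d =>
  induction z using Finsupp.induction_linear with
  | zero => simp
  | add z z' hz hz' => rw [assoc_add_right, assoc_add_middle, hz, hz']
  | single k e =>
  rw [assoc_single, assoc_single, hc, add_right_comm i j k, mul_right_comm a d e]

end gradedProd

lemma one_add_mul_intCast_ne_zero {b : ℂ} (hb : ∀ n : ℤ, n ≠ 0 → b ≠ (n : ℂ)⁻¹) (m : ℤ) :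
    1 + b * m ≠ 0 := by
  intro hm
  have hm0 : m ≠ 0 := by rintro rfl; simp at hm
  refine hb (-m) (neg_ne_zero.mpr hm0) ?_
  push_cast
  exact eq_inv_of_mul_eq_one_right (by linear_combination -hm)

lemma isPreLieStructureConstants_div_one_add_mul {b : ℂ} (hden : ∀ m : ℤ, 1 + b * m ≠ 0) :
    IsPreLieStructureConstants fun i j => i / (1 + b * j) := by
  intro i j k
  have hj := hden j
  have hk := hden k
  have hjk := hden (j + k)
  have hkj := hden (k + j)
  push_cast at hjk hkj ⊢
  field_simp
  ring

/-- For any `b : ℂ` that is not the inverse of a nonzero integer, the product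
`e_i ∘ e_j = (i / (1 + b j)) e_{i+j}` satisfies the pre-Lie identity. -/
theorem Bb_is_preLie (b : ℂ) (hb : ∀ n : ℤ, n ≠ 0 → b ≠ (n : ℂ)⁻¹) :
    ∀ x y z : ℤ →₀ ℂ,
      gradedProd (fun i j => i / (1 + b * j)) (gradedProd (fun i j => i / (1 + b * j)) x y) z
        - gradedProd (fun i j => i / (1 + b * j)) x (gradedProd (fun i j => i / (1 + b * j)) y z)
      = gradedProd (fun i j => i / (1 + b * j)) (gradedProd (fun i j => i / (1 + b * j)) x z) y
        - gradedProd (fun i j => i / (1 + b * j)) x (gradedProd (fun i j => i / (1 + b * j)) z y) :=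
  gradedProd.assoc_comm_of_isPreLieStructureConstants _
    (isPreLieStructureConstants_div_one_add_mul (one_add_mul_intCast_ne_zero hb))
end

section
/- Let f, g : ℤ → ℂ. The product e_i ∘ e_j = f(i)g(j)e_{i+j} on E = ⊕_{i∈ℤ} ℂe_i satisfies the pre-Lie identity if and only if for all i,j,k ∈ ℤ: f(i)·((f(i+j) - f(i+k))·g(j)·g(k) + (f(k)·g(j) - f(j)·g(k))·g(j+k)) = 0. -/
lemma gradedProd_single_left (c : ℤ → ℤ → ℂ) (i : ℤ) (a : ℂ) (y : ℤ →₀ ℂ) :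
    gradedProd c (Finsupp.single i a) y
      = y.sum fun j yj => Finsupp.single (i + j) (a * yj * c i j) := by
  unfold gradedProd
  rw [Finsupp.sum_single_index]
  simp

lemma gradedProd_single_right (c : ℤ → ℤ → ℂ) (x : ℤ →₀ ℂ) (j : ℤ) (b : ℂ) :
    gradedProd c x (Finsupp.single j b)
      = x.sum fun i xi => Finsupp.single (i + j) (xi * b * c i j) := by
  unfold gradedProd
  refine Finsupp.sum_congr fun i _ => ?_
  rw [Finsupp.sum_single_index]
  simp

lemma gradedProd_add_left (c : ℤ → ℤ → ℂ) (x x' y : ℤ →₀ ℂ) :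
    gradedProd c (x + x') y = gradedProd c x y + gradedProd c x' y := by
  unfold gradedProd
  rw [Finsupp.sum_add_index'] <;> intros <;>
    simp [add_mul, Finsupp.single_add, Finsupp.sum_add]

lemma gradedProd_add_right (c : ℤ → ℤ → ℂ) (x y y' : ℤ →₀ ℂ) :
    gradedProd c x (y + y') = gradedProd c x y + gradedProd c x y' := by
  unfold gradedProd
  rw [← Finsupp.sum_add]
  refine Finsupp.sum_congr fun i _ => ?_
  rw [Finsupp.sum_add_index'] <;> intros <;>
    simp [mul_add, add_mul, Finsupp.single_add]

/-- `gradedProd c · z` as an additive monoid hom. -/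
noncomputable def gpL (c : ℤ → ℤ → ℂ) (z : ℤ →₀ ℂ) : (ℤ →₀ ℂ) →+ (ℤ →₀ ℂ) where
  toFun x := gradedProd c x z
  map_zero' := by unfold gradedProd; simp
  map_add' x x' := gradedProd_add_left c x x' z

/-- `gradedProd c x ·` as an additive monoid hom. -/
noncomputable def gpR (c : ℤ → ℤ → ℂ) (x : ℤ →₀ ℂ) : (ℤ →₀ ℂ) →+ (ℤ →₀ ℂ) where
  toFun y := gradedProd c x y
  map_zero' := by unfold gradedProd; simp
  map_add' y y' := gradedProd_add_right c x y y'

lemma triple_left (c : ℤ → ℤ → ℂ) (x y z : ℤ →₀ ℂ) :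
    gradedProd c (gradedProd c x y) z
      = x.sum fun i xi => y.sum fun j yj => z.sum fun k zk =>
          Finsupp.single (i + j + k) (xi * yj * zk * (c i j * c (i + j) k)) := by
  have : gradedProd c (gradedProd c x y) z = gpL c z (gradedProd c x y) := rfl
  rw [this]
  unfold gradedProd
  rw [map_finsuppSum]
  refine Finsupp.sum_congr fun i _ => ?_
  rw [map_finsuppSum]
  refine Finsupp.sum_congr fun j _ => ?_
  show gradedProd c (Finsupp.single (i + j) _) z = _
  rw [gradedProd_single_left]
  refine Finsupp.sum_congr fun k _ => ?_
  congr 1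
  ring

lemma triple_right (c : ℤ → ℤ → ℂ) (x y z : ℤ →₀ ℂ) :
    gradedProd c x (gradedProd c y z)
      = x.sum fun i xi => y.sum fun j yj => z.sum fun k zk =>
          Finsupp.single (i + j + k) (xi * yj * zk * (c j k * c i (j + k))) := by
  have : gradedProd c x (gradedProd c y z) = gpR c x (gradedProd c y z) := rfl
  rw [this]
  unfold gradedProd
  rw [map_finsuppSum]
  have step : ∀ j (yj : ℂ),
      (gpR c x) (z.sum fun k zk => Finsupp.single (j + k) (yj * zk * c j k))
        = z.sum fun k zk => x.sum fun i xi =>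
            Finsupp.single (i + j + k) (xi * yj * zk * (c j k * c i (j + k))) := by
    intro j yj
    rw [map_finsuppSum]
    refine Finsupp.sum_congr fun k _ => ?_
    show gradedProd c x (Finsupp.single (j + k) _) = _
    rw [gradedProd_single_right]
    refine Finsupp.sum_congr fun i _ => ?_
    rw [add_assoc]
    congr 1
    ring
  simp only [Finsupp.sum] at step ⊢
  simp only [step]
  exact Eq.trans (Finset.sum_congr rfl fun j _ => Finset.sum_comm) Finset.sum_comm

/-- The product `e_i ∘ e_j = f(i) g(j) e_{i+j}` satisfies the pre-Lie identity
iff the coefficients `C_{i,j,k}` all vanish. -/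
theorem preLie_iff_coeffs (f g : ℤ → ℂ) :
    (∀ x y z : ℤ →₀ ℂ,
      gradedProd (fun i j => f i * g j) (gradedProd (fun i j => f i * g j) x y) z
        - gradedProd (fun i j => f i * g j) x (gradedProd (fun i j => f i * g j) y z)
      = gradedProd (fun i j => f i * g j) (gradedProd (fun i j => f i * g j) x z) y
        - gradedProd (fun i j => f i * g j) x (gradedProd (fun i j => f i * g j) z y))
    ↔ (∀ i j k : ℤ,
        f i * ((f (i + j) - f (i + k)) * g j * g k
          + (f k * g j - f j * g k) * g (j + k)) = 0) := by
  set c : ℤ → ℤ → ℂ := fun i j => f i * g j with hc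
  constructor
  · intro h i j k
    have H := h (Finsupp.single i 1) (Finsupp.single j 1) (Finsupp.single k 1)
    rw [triple_left, triple_left, triple_right, triple_right] at H
    rw [Finsupp.sum_single_index (by simp), Finsupp.sum_single_index (by simp),
        Finsupp.sum_single_index (by simp), Finsupp.sum_single_index (by simp),
        Finsupp.sum_single_index (by simp), Finsupp.sum_single_index (by simp),
        Finsupp.sum_single_index (by simp), Finsupp.sum_single_index (by simp),
        Finsupp.sum_single_index (by simp), Finsupp.sum_single_index (by simp),
        Finsupp.sum_single_index (by simp), Finsupp.sum_single_index (by simp)] at H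
    have H2 := DFunLike.congr_fun H (i + j + k)
    simp only [Finsupp.sub_apply, Finsupp.single_eq_same, hc] at H2
    rw [show i + k + j = i + j + k by ring] at H2
    simp only [Finsupp.single_eq_same] at H2
    rw [show k + j = j + k from add_comm k j] at H2
    linear_combination H2
  · intro h x y z
    rw [triple_left, triple_left, triple_right, triple_right]
    simp only [Finsupp.sum, ← Finset.sum_sub_distrib]
    refine Finset.sum_congr rfl fun i _ => ?_
    rw [Finset.sum_comm]
    refine Finset.sum_congr rfl fun k _ => ?_
    refine Finset.sum_congr rfl fun j _ => ?_
    rw [show i + k + j = i + j + k by ring]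
    rw [← Finsupp.single_sub, ← Finsupp.single_sub]
    congr 1
    have := h i j k
    simp only [hc]
    rw [show k + j = j + k from add_comm k j]
    linear_combination (x i * y j * z k) * this
end

section
/- Let f : ℤ → ℂ with f(0) = 1 and suppose f(i)·(f(i+j) - f(j) - f(i+k) + f(k)) = 0 for all i,j,k ∈ ℤ. If f(1) ≠ 0, then setting a = f(1) - 1, one has f(k) = 1 + k·a for all k ∈ ℤ. -/
theorem Int.eq_add_zsmul_of_add_one {G : Type*} [AddGroup G] {f : ℤ → G} {a : G}
    (hf : ∀ j, f (j + 1) = f j + a) (k : ℤ) : f k = f 0 + k • a := by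
  induction k using Int.induction_on with
  | zero => simp
  | succ n ih => rw [hf, ih, add_zsmul, one_zsmul, add_assoc]
  | pred n ih =>
    rw [← add_right_cancel_iff (a := a), ← hf, sub_add_cancel, ih, sub_zsmul, one_zsmul, add_assoc,
      neg_add_cancel_right]

theorem apply_add_one_eq_of_preLie_relation {R : Type*} [CommRing R] [NoZeroDivisors R] {f : ℤ → R}
    (h0 : f 0 = 1) (heq : ∀ i j k : ℤ, f i * (f (i + j) - f j - f (i + k) + f k) = 0)
    (h1 : f 1 ≠ 0) (j : ℤ) : f (j + 1) = f j + (f 1 - 1) := by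
  have h := (mul_eq_zero.mp (heq 1 j 0)).resolve_left h1
  rw [add_zero, h0, add_comm 1 j] at h
  linear_combination h

/-- If `f : ℤ → ℂ` with `f 0 = 1` satisfies the simplified pre-Lie relation and
`f 1 ≠ 0`, then `f k = 1 + k a` where `a = f 1 - 1`. -/
theorem case_A_d_eq_one (f : ℤ → ℂ) (h0 : f 0 = 1)
    (heq : ∀ i j k : ℤ, f i * (f (i + j) - f j - f (i + k) + f k) = 0)
    (h1 : f 1 ≠ 0) :
    ∀ k : ℤ, f k = 1 + k * (f 1 - 1) := by
  intro k
  rw [Int.eq_add_zsmul_of_add_one (apply_add_one_eq_of_preLie_relation h0 heq h1) k, h0, zsmul_eq_mul]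
end

section
/- Let f : ℤ → ℂ with f(0) = 1, satisfying f(i)·(f(i+j) - f(j) - f(i+k) + f(k)) = 0 for all i,j,k ∈ ℤ. Suppose d ≥ 3 is the smallest positive integer with f(d) ≠ 0, and write f(d) = 1 + a. Then a = 0. -/
/-- If `f : ℤ → ℂ` with `f 0 = 1` satisfies the simplified pre-Lie relation, and
`d ≥ 3` is the smallest positive integer with `f d ≠ 0`, `f d = 1 + a`, then `a = 0`. -/
theorem case_A_d_ge_three (f : ℤ → ℂ) (h0 : f 0 = 1)
    (heq : ∀ i j k : ℤ, f i * (f (i + j) - f j - f (i + k) + f k) = 0)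
    (d : ℤ) (hd : 3 ≤ d) (hmin : ∀ i : ℤ, 1 ≤ i → i < d → f i = 0)
    (hfd : f d ≠ 0) (a : ℂ) (ha : f d = 1 + a) :
    a = 0 := by
  have hA : ∀ j : ℤ, f (d + j) = f j + a := by
    intro j
    have h := heq d j 0
    rw [mul_eq_zero] at h
    rcases h with h | h
    · exact absurd h hfd
    · rw [add_zero] at h
      rw [h0, ha] at h
      linear_combination h
  have hf1 : f 1 = 0 := hmin 1 le_rfl (by linarith)
  have hf2 : f 2 = 0 := hmin 2 (by norm_num) (by linarith)
  have hfd1 : f (d + 1) = a := by rw [hA 1, hf1, zero_add]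
  by_contra hane
  have hfd1ne : f (d + 1) ≠ 0 := by rw [hfd1]; exact hane
  have hB : ∀ j : ℤ, f (d + 1 + j) = f j + a - 1 := by
    intro j
    have h := heq (d + 1) j 0
    rw [mul_eq_zero] at h
    rcases h with h | h
    · exact absurd h hfd1ne
    · rw [add_zero] at h
      rw [hfd1, h0] at h
      linear_combination h
  have key : f 2 = f 1 - 1 := by
    have h1 := hB 1
    have h2 := hA 2
    have : d + 1 + 1 = d + 2 := by ring
    rw [this, h2] at h1
    linear_combination h1
  rw [hf1, hf2] at key
  norm_num at key
end

section
/- Let f : ℤ → ℂ satisfy f(0) = 0 and f(i)·(f(i+j) - f(i) - f(j)) = 0 for all i,j ∈ ℤ. If d is the smallest positive integer with f(d) ≠ 0 and f(d) = d, then f(i) = i for all i ∈ ℤ. -/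
/-!
Wherever `f a ≠ 0`, the functional equation says `f (a + j) = f a + f j` for all `j`.
If `f 1 ≠ 0` this makes `f` additive along `1`; otherwise `f (d + 1) = f d + f 1 = f d ≠ 0`,
and additivity along both `d` and `d + 1` again gives additivity along `1`.
Hence `f i = i * f 1`, and `f d = d ≠ 0` forces `f 1 = 1`.
-/

theorem Int.eq_zsmul_of_map_one_add {G : Type*} [AddGroup G] {f : ℤ → G}
    (h : ∀ j, f (1 + j) = f 1 + f j) (i : ℤ) : f i = i • f 1 := by
  induction i using Int.induction_on with
  | zero => simpa using h 0
  | succ n ih => rw [add_comm (n : ℤ) 1, h, ih, add_zsmul, one_zsmul]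
  | pred n ih =>
    have h_pred := h (-n - 1)
    rw [show 1 + (-n - 1) = -(n : ℤ) by ring, ih] at h_pred
    rw [eq_neg_add_of_add_eq h_pred.symm, show -(n : ℤ) - 1 = -1 + -n by ring, add_zsmul,
      neg_one_zsmul]

section FunctionalEquation

variable {R : Type*} [Ring R] [NoZeroDivisors R] {f : ℤ → R}
  (heq : ∀ i j : ℤ, f i * (f (i + j) - f i - f j) = 0)
include heq

theorem map_add_eq_of_map_ne_zero {a : ℤ} (ha : f a ≠ 0) (j : ℤ) :
    f (a + j) = f a + f j := by
  have h := (mul_eq_zero.mp (heq a j)).resolve_left ha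
  rwa [sub_sub, sub_eq_zero] at h

theorem map_one_add_of_map_ne_zero {d : ℤ} (hd : f d ≠ 0) (j : ℤ) :
    f (1 + j) = f 1 + f j := by
  by_cases h1 : f 1 = 0
  · have hd1 : f (d + 1) ≠ 0 := by rwa [map_add_eq_of_map_ne_zero heq hd, h1, add_zero]
    have h := map_add_eq_of_map_ne_zero heq hd1 j
    rw [add_assoc, map_add_eq_of_map_ne_zero heq hd, map_add_eq_of_map_ne_zero heq hd 1,
      add_assoc] at h
    exact add_left_cancel h
  · exact map_add_eq_of_map_ne_zero heq h1 j

theorem eq_intCast_mul_of_map_ne_zero {d : ℤ} (hd : f d ≠ 0) (i : ℤ) : f i = i * f 1 := by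
  rw [Int.eq_zsmul_of_map_one_add (map_one_add_of_map_ne_zero heq hd) i, zsmul_eq_mul]

theorem eq_intCast_of_map_eq_intCast {d : ℤ} (hd : f d ≠ 0) (hnorm : f d = d) (i : ℤ) :
    f i = i := by
  have h1 : f 1 = 1 := by
    have hd_mul : (d : R) * f 1 = d * 1 := by
      rw [mul_one, ← eq_intCast_mul_of_map_ne_zero heq hd d, hnorm]
    exact mul_left_cancel₀ (hnorm ▸ hd) hd_mul
  rw [eq_intCast_mul_of_map_ne_zero heq hd, h1, mul_one]

end FunctionalEquation

theorem case_B_f_is_identity_general (f : ℤ → ℂ)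
    (heq : ∀ i j : ℤ, f i * (f (i + j) - f i - f j) = 0)
    (d : ℤ)
    (hfd : f d ≠ 0) (hnorm : f d = (d : ℂ)) :
    ∀ i : ℤ, f i = (i : ℂ) :=
  eq_intCast_of_map_eq_intCast heq hfd hnorm

/-- If `f : ℤ → ℂ` with `f 0 = 0` satisfies `f(i)(f(i+j) - f(i) - f(j)) = 0`, and
`d` is the smallest positive integer with `f d ≠ 0`, normalized so that `f d = d`,
then `f i = i` for all `i`. -/
theorem case_B_f_is_identity (f : ℤ → ℂ) (h0 : f 0 = 0)
    (heq : ∀ i j : ℤ, f i * (f (i + j) - f i - f j) = 0)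
    (d : ℤ) (hd : 0 < d) (hmin : ∀ i : ℤ, 0 < i → i < d → f i = 0)
    (hfd : f d ≠ 0) (hnorm : f d = (d : ℂ)) :
    ∀ i : ℤ, f i = (i : ℂ) :=
  case_B_f_is_identity_general f heq d hfd hnorm
end

section
/- Let h : ℤ → ℂ with h(0) = 1, satisfying k·(h(j+k) - h(k)) = j·(h(j+k) - h(j)) for all j,k ∈ ℤ. Then, setting b = h(1) - 1, one has h(j) = 1 + b·j for all j ∈ ℤ. -/
/-! Both constants and the identity satisfy the (linear) functional equation, so the defect
`g j = h j - (1 + b j)` satisfies it too, with `g 0 = g 1 = 0`. Taking `k = 1` gives the recurrence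
`(n - 1) g(n + 1) = n g(n)`, which propagates `g = 0` upward from `g 2 = 0` and downward from
`g 0 = 0`; the value `g 2 = 0` comes from the instance `j = 2, k = -1`. -/

variable {R : Type*} [CommRing R]

def BalancedIncrements (h : ℤ → R) : Prop :=
  ∀ j k : ℤ, (k : R) * (h (j + k) - h k) = (j : R) * (h (j + k) - h j)

namespace BalancedIncrements

theorem sub_affine {h : ℤ → R} (hh : BalancedIncrements h) (a b : R) :
    BalancedIncrements fun j => h j - (a + b * j) := by
  intro j k
  push_cast
  linear_combination hh j k

variable {g : ℤ → R}

theorem sub_one_mul_succ (hg : BalancedIncrements g) (hg1 : g 1 = 0) (n : ℤ) :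
    ((n : R) - 1) * g (n + 1) = n * g n := by
  linear_combination -hg n 1 - hg1

variable [IsDomain R] [CharZero R]

theorem eq_zero_of_succ (hg : BalancedIncrements g) (hg1 : g 1 = 0) {n : ℤ} (hn : n ≠ 0)
    (hsucc : g (n + 1) = 0) : g n = 0 := by
  have := hg.sub_one_mul_succ hg1 n
  rw [hsucc, mul_zero, eq_comm] at this
  exact (mul_eq_zero.mp this).resolve_left (by exact_mod_cast hn)

theorem succ_eq_zero (hg : BalancedIncrements g) (hg1 : g 1 = 0) {n : ℤ} (hn : n ≠ 1)
    (hn0 : g n = 0) : g (n + 1) = 0 := by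
  have := hg.sub_one_mul_succ hg1 n
  rw [hn0, mul_zero] at this
  exact (mul_eq_zero.mp this).resolve_left (sub_ne_zero.mpr (by exact_mod_cast hn))

theorem eq_zero (hg : BalancedIncrements g) (hg0 : g 0 = 0) (hg1 : g 1 = 0) (n : ℤ) :
    g n = 0 := by
  have hg_neg_one : g (-1) = 0 := hg.eq_zero_of_succ hg1 (by norm_num) (by simpa using hg0)
  have hg2 : g 2 = 0 := by simpa [hg1, hg_neg_one] using hg 2 (-1)
  obtain hn | rfl | hn := show n ≤ 0 ∨ n = 1 ∨ 2 ≤ n by omega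
  · induction n, hn using Int.leInductionDown with
    | base => exact hg0
    | pred m hm ih => exact hg.eq_zero_of_succ hg1 (by omega) (by simpa using ih)
  · exact hg1
  · induction n, hn using Int.leInduction with
    | base => exact hg2
    | succ m hm ih => exact hg.succ_eq_zero hg1 (by omega) ih

end BalancedIncrements

/-- If `h : ℤ → ℂ` with `h 0 = 1` satisfies `k(h(j+k) - h(k)) = j(h(j+k) - h(j))`,
then `h j = 1 + b j` where `b = h 1 - 1`. -/
theorem case_B_h_is_affine (h : ℤ → ℂ) (h0 : h 0 = 1)
    (heq : ∀ j k : ℤ, (k : ℂ) * (h (j + k) - h k) = (j : ℂ) * (h (j + k) - h j)) :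
    ∀ j : ℤ, h j = 1 + (h 1 - 1) * j := by
  intro j
  have hg := (show BalancedIncrements h from heq).sub_affine 1 (h 1 - 1)
  exact sub_eq_zero.mp (hg.eq_zero (by simp [h0]) (by simp) j)
end

section
/- The map e_i ↦ e_{-i} defines a pre-Lie algebra isomorphism from A_a to A_{-a}, and the map e_i ↦ -e_{-i} defines a pre-Lie algebra isomorphism from B_b to B_{-b}. -/
/-- The product of the pre-Lie algebra `A_a`: `e_i ∘ e_j = (1 + a i) e_{i+j}`. -/
noncomputable def mulA (a : ℂ) (x y : ℤ →₀ ℂ) : ℤ →₀ ℂ :=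
  gradedProd (fun i _ => 1 + a * i) x y

/-- The product of the pre-Lie algebra `B_b`: `e_i ∘ e_j = (i/(1 + b j)) e_{i+j}`. -/
noncomputable def mulB (b : ℂ) (x y : ℤ →₀ ℂ) : ℤ →₀ ℂ :=
  gradedProd (fun i j => (i : ℂ) / (1 + b * j)) x y

lemma gradedProd_mapNeg (c : ℤ → ℤ → ℂ) (x y : ℤ →₀ ℂ) :
    gradedProd c (Finsupp.mapDomain Neg.neg x) (Finsupp.mapDomain Neg.neg y)
      = Finsupp.mapDomain Neg.neg (gradedProd (fun i j => c (-i) (-j)) x y) := by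
  unfold gradedProd
  rw [Finsupp.sum_mapDomain_index_inj neg_injective, Finsupp.mapDomain_sum]
  refine Finsupp.sum_congr fun i _ => ?_
  rw [Finsupp.sum_mapDomain_index_inj neg_injective, Finsupp.mapDomain_sum]
  refine Finsupp.sum_congr fun j _ => ?_
  rw [Finsupp.mapDomain_single, neg_add]

lemma gradedProd_neg_neg (c : ℤ → ℤ → ℂ) (x y : ℤ →₀ ℂ) :
    gradedProd c (-x) (-y) = gradedProd c x y := by
  unfold gradedProd
  rw [Finsupp.sum_neg_index (fun i => by simp)]
  refine Finsupp.sum_congr fun i _ => ?_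
  rw [Finsupp.sum_neg_index (fun j => by simp)]
  refine Finsupp.sum_congr fun j _ => ?_
  ring_nf

lemma gradedProd_congr (c c' : ℤ → ℤ → ℂ) (h : ∀ i j, c i j = c' i j) (x y : ℤ →₀ ℂ) :
    gradedProd c x y = gradedProd c' x y := by
  unfold gradedProd
  refine Finsupp.sum_congr fun i _ => Finsupp.sum_congr fun j _ => by rw [h]

lemma gradedProd_neg_coeff (c : ℤ → ℤ → ℂ) (x y : ℤ →₀ ℂ) :
    gradedProd (fun i j => -c i j) x y = -gradedProd c x y := by
  unfold gradedProd
  rw [← Finsupp.sum_neg]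
  refine Finsupp.sum_congr fun i _ => ?_
  rw [← Finsupp.sum_neg]
  refine Finsupp.sum_congr fun j _ => ?_
  rw [← Finsupp.single_neg]
  ring_nf

/-- `e_i ↦ e_{-i}` gives a pre-Lie isomorphism `A_a ≃ A_{-a}`, and
`e_i ↦ -e_{-i}` gives a pre-Lie isomorphism `B_b ≃ B_{-b}`. -/
theorem iso_Aa_Anega_and_Bb_Bnegb (a b : ℂ) (hb : ∀ n : ℤ, n ≠ 0 → b ≠ (n : ℂ)⁻¹) :
    (∃ φ : (ℤ →₀ ℂ) ≃ₗ[ℂ] (ℤ →₀ ℂ),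
      (∀ i : ℤ, φ (Finsupp.single i 1) = Finsupp.single (-i) 1) ∧
      ∀ x y : ℤ →₀ ℂ, φ (mulA a x y) = mulA (-a) (φ x) (φ y)) ∧
    (∃ ψ : (ℤ →₀ ℂ) ≃ₗ[ℂ] (ℤ →₀ ℂ),
      (∀ i : ℤ, ψ (Finsupp.single i 1) = -Finsupp.single (-i) 1) ∧
      ∀ x y : ℤ →₀ ℂ, ψ (mulB b x y) = mulB (-b) (ψ x) (ψ y)) := by
  set φ : (ℤ →₀ ℂ) ≃ₗ[ℂ] (ℤ →₀ ℂ) := Finsupp.domLCongr (Equiv.neg ℤ)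
  have hφ : ∀ x : ℤ →₀ ℂ, φ x = Finsupp.mapDomain Neg.neg x := fun x => by
    show Finsupp.equivMapDomain (Equiv.neg ℤ) x = _
    rw [Finsupp.equivMapDomain_eq_mapDomain]
    rfl
  have hneg : ∀ z : ℤ →₀ ℂ, Finsupp.mapDomain (α := ℤ) (M := ℂ) Neg.neg (-z)
      = -Finsupp.mapDomain Neg.neg z := fun z =>
    (Finsupp.lmapDomain ℂ ℂ Neg.neg).map_neg z
  constructor
  · refine ⟨φ, fun i => by rw [hφ, Finsupp.mapDomain_single], fun x y => ?_⟩
    simp only [hφ, mulA]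
    rw [gradedProd_mapNeg]
    refine congrArg _ (gradedProd_congr _ _ (fun i j => by push_cast; ring) x y).symm
  · refine ⟨φ.trans (LinearEquiv.neg ℂ), fun i => by
      rw [LinearEquiv.trans_apply, LinearEquiv.neg_apply, hφ, Finsupp.mapDomain_single],
      fun x y => ?_⟩
    simp only [LinearEquiv.trans_apply, LinearEquiv.neg_apply, hφ, mulB]
    rw [gradedProd_neg_neg, gradedProd_mapNeg]
    conv_rhs => rw [gradedProd_congr _ (fun i j => -((i : ℂ) / (1 + b * j)))
        (fun i j => by push_cast; rw [neg_mul_neg, neg_div]) x y]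
    rw [gradedProd_neg_coeff, hneg]
end

section
/- Let f : ℤ → ℂ with f(0) = 1, satisfying f(i)·(f(i+j) - f(j) - f(i+k) + f(k)) = 0 for all i,j,k ∈ ℤ. Suppose d > 1 is a positive integer with f(d) = 1 (i.e., the case a = 0 of the minimal nonvanishing index). Then f is periodic with period d: f(i + d) = f(i) for all i ∈ ℤ, and hence f(i) = 1 when d divides i and f(i) = 0 otherwise, given f(i) = 0 for 0 < i < d. -/
/-- If `f : ℤ → ℂ` with `f 0 = 1` satisfies the simplified pre-Lie relation, with
`d > 1`, `f d = 1` (the case `a = 0`), and `f i = 0` for `0 < i < d`, then `f` is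
periodic of period `d`, equal to `1` on multiples of `d` and `0` elsewhere. -/
theorem case_A_a_eq_zero_periodic (f : ℤ → ℂ) (h0 : f 0 = 1)
    (heq : ∀ i j k : ℤ, f i * (f (i + j) - f j - f (i + k) + f k) = 0)
    (d : ℤ) (hd : 1 < d) (hfd : f d = 1)
    (hmin : ∀ i : ℤ, 0 < i → i < d → f i = 0) :
    (∀ i : ℤ, f (i + d) = f i) ∧
    (∀ i : ℤ, (d ∣ i → f i = 1) ∧ (¬ d ∣ i → f i = 0)) := by
  have hP : Function.Periodic f d := by
    intro x
    have h := heq d x 0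
    rw [hfd, add_zero, hfd, h0, one_mul] at h
    have : f (d + x) = f x := by linear_combination h
    rwa [add_comm] at this
  have hmod : ∀ i : ℤ, f i = f (i % d) := by
    intro i
    conv_lhs => rw [← Int.emod_add_mul_ediv i d]
    have := (hP.int_mul (i / d)) (i % d)
    rw [mul_comm] at this
    exact this
  refine ⟨hP, fun i => ⟨?_, ?_⟩⟩
  · intro hdvd
    rw [hmod i, Int.emod_eq_zero_of_dvd hdvd, h0]
  · intro hndvd
    rw [hmod i]
    apply hmin
    · have h1 : 0 ≤ i % d := Int.emod_nonneg i (by omega)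
      have h2 : i % d ≠ 0 := fun h => hndvd (Int.dvd_of_emod_eq_zero h)
      omega
    · exact Int.emod_lt_of_pos i (by omega)
end
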